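/- Let φ(x) = x − g_0(x), where g_0 is defined by the backward recursion g_N(x) = f'(x)/(R + f''(x)), g_l(x) = (f'(x) + R·g_{l+1}(x))/(R + f''(x)). If f'(x*) = 0 and f''(x*) > 0 with R > 0, then φ'(x*) = (R/(R + f''(x*)))^{N+1}. -/

import Mathlib

/-!
At `x*` every `g_l` vanishes, since `f'(x*) = 0`, so the quotient rule collapses to
`g_l'(x*) = (f''(x*) + R g_{l+1}'(x*)) / (R + f''(x*))`. Writing `r = R / (R + f''(x*))`, this says
`1 - g_l' = r (1 - g_{l+1}')`, and `1 - g_N' = r`; hence `1 - g_0'(x*) = r^(N+1)`.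
-/

theorem HasDerivAt.div_of_apply_eq_zero {𝕜 : Type*} [NontriviallyNormedField 𝕜] {n d : 𝕜 → 𝕜}
    {n' d' x : 𝕜} (hn : HasDerivAt n n' x) (hd : HasDerivAt d d' x) (hnx : n x = 0)
    (hdx : d x ≠ 0) : HasDerivAt (fun y => n y / d y) (n' / d x) x := by
  have h := hn.div hd hdx
  rwa [hnx, zero_mul, sub_zero, sq, ← div_div, mul_div_cancel_right₀ _ hdx] at h

theorem add_mul_one_sub_pow_div_eq (R c : ℝ) (hRc : R + c ≠ 0) (k : ℕ) :
    (c + R * (1 - (R / (R + c)) ^ k)) / (R + c) = 1 - (R / (R + c)) ^ (k + 1) := by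
  rw [div_eq_iff hRc, pow_succ]
  field_simp
  ring

section BackwardRecursion

variable {p q : ℝ → ℝ} {R x : ℝ}

theorem hasDerivAt_recursion_step (hp : HasDerivAt p (q x) x) (hq : DifferentiableAt ℝ q x)
    (hpx : p x = 0) (hRq : R + q x ≠ 0) {u : ℝ → ℝ} {k : ℕ}
    (hu : HasDerivAt u (1 - (R / (R + q x)) ^ k) x) (hux : u x = 0) :
    HasDerivAt (fun y => (p y + R * u y) / (R + q y)) (1 - (R / (R + q x)) ^ (k + 1)) x := by
  rw [← add_mul_one_sub_pow_div_eq R (q x) hRq]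
  exact (hp.add (hu.const_mul R)).div_of_apply_eq_zero (hq.hasDerivAt.const_add R)
    (by simp [hpx, hux]) hRq

theorem hasDerivAt_backward_recursion (hp : HasDerivAt p (q x) x)
    (hq : DifferentiableAt ℝ q x) (hpx : p x = 0) (hRq : R + q x ≠ 0) {N : ℕ}
    {g : ℕ → ℝ → ℝ} (hgN : ∀ y, g N y = p y / (R + q y))
    (hrec : ∀ l < N, ∀ y, g l y = (p y + R * g (l + 1) y) / (R + q y)) :
    ∀ k ≤ N, HasDerivAt (g (N - k)) (1 - (R / (R + q x)) ^ (k + 1)) x ∧ g (N - k) x = 0 := by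
  intro k
  induction k with
  | zero =>
    intro _
    have hg : g N = fun y => (p y + R * (fun _ => (0 : ℝ)) y) / (R + q y) := by
      funext y
      simp [hgN]
    refine ⟨?_, by simp [hgN, hpx]⟩
    rw [Nat.sub_zero, hg]
    exact hasDerivAt_recursion_step hp hq hpx hRq (k := 0) (by simpa using hasDerivAt_const x 0) rfl
  | succ k ih =>
    intro hk
    obtain ⟨hderiv, hzero⟩ := ih (by omega)
    have hg : g (N - (k + 1)) = fun y => (p y + R * g (N - k) y) / (R + q y) := by
      funext y
      rw [hrec _ (by omega), show N - (k + 1) + 1 = N - k by omega]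
    rw [hg]
    exact ⟨hasDerivAt_recursion_step hp hq hpx hRq hderiv hzero, by simp [hpx, hzero]⟩

end BackwardRecursion

/-- φ'(x*) = (R/(R + f''(x*)))^(N+1) for φ(x) = x − g_0(x). -/
theorem stmt2 (f : ℝ → ℝ) (hf : ContDiff ℝ 3 f) (R : ℝ) (hR : 0 < R) (N : ℕ)
    (g : ℕ → ℝ → ℝ)
    (hgN : ∀ x : ℝ, g N x = deriv f x / (R + deriv (deriv f) x))
    (hrec : ∀ l < N, ∀ x : ℝ,
      g l x = (deriv f x + R * g (l + 1) x) / (R + deriv (deriv f) x))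
    (xs : ℝ) (hxs : deriv f xs = 0) (hf2 : 0 < deriv (deriv f) xs) :
    deriv (fun x => x - g 0 x) xs = (R / (R + deriv (deriv f) xs)) ^ (N + 1) := by
  have hf' : ContDiff ℝ 2 (deriv f) := hf.deriv'
  have hf'' : ContDiff ℝ 1 (deriv (deriv f)) := hf'.deriv'
  have hg0 := (hasDerivAt_backward_recursion
    (hf'.differentiable (by norm_num) xs).hasDerivAt (hf''.differentiable one_ne_zero xs) hxs
    (by positivity) hgN hrec N le_rfl).1
  rw [Nat.sub_self] at hg0
  rw [((hasDerivAt_id' xs).fun_sub hg0).deriv]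
  ring
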